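/- Suppose the MPDA rule D^M is manipulable at profile P by a coalition A' via misreports P̃_{A'}. Then every man weakly prefers his match at the true profile to his match at the manipulated profile: D^M_m(P) R_m D^M_m(P̃_{A'}, P_{-A'}) for all men m. -/

import Mathlib

/-- A one-to-one matching between men `M` and women `W`; `none` means unmatched. -/
structure Matching (M W : Type*) where
  menMatch : M → Option W
  womenMatch : W → Option M
  consistent : ∀ m w, menMatch m = some w ↔ womenMatch w = some m

/-- A preference profile: each man has a strict linear order over `W ∪ {∅}`
(encoded as `Option W`, with `none` the outside option), and each woman over `M ∪ {∅}`. -/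
structure Profile (M W : Type*) where
  menPref : M → LinearOrder (Option W)
  womenPref : W → LinearOrder (Option M)

variable {M W : Type*}

def IndividuallyRational (μ : Matching M W) (P : Profile M W) : Prop :=
  (∀ m, (P.menPref m).le none (μ.menMatch m)) ∧
  (∀ w, (P.womenPref w).le none (μ.womenMatch w))

def Blocks (m : M) (w : W) (μ : Matching M W) (P : Profile M W) : Prop :=
  (P.menPref m).lt (μ.menMatch m) (some w) ∧
  (P.womenPref w).lt (μ.womenMatch w) (some m)

def Stable (μ : Matching M W) (P : Profile M W) : Prop :=
  IndividuallyRational μ P ∧ ∀ m w, ¬ Blocks m w μ P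

/-- The men-optimal stable matching: stable, and every man weakly prefers it to
any stable matching.  This characterizes the outcome of the men-proposing
deferred acceptance (MPDA) algorithm. -/
def MenOptimalStable (μ : Matching M W) (P : Profile M W) : Prop :=
  Stable μ P ∧
    ∀ ν : Matching M W, Stable ν P → ∀ m, (P.menPref m).le (ν.menMatch m) (μ.menMatch m)

/-- The women-optimal stable matching, i.e. the outcome of women-proposing DA. -/
def WomenOptimalStable (μ : Matching M W) (P : Profile M W) : Prop :=
  Stable μ P ∧
    ∀ ν : Matching M W, Stable ν P → ∀ w, (P.womenPref w).le (ν.womenMatch w) (μ.womenMatch w)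

def Matching.empty (M W : Type*) : Matching M W :=
  ⟨fun _ => none, fun _ => none, by intro m w; simp⟩

/-- The men-proposing deferred acceptance rule `D^M`. -/
noncomputable def mpda (P : Profile M W) : Matching M W :=
  letI := Classical.dec (∃ μ : Matching M W, MenOptimalStable μ P)
  if h : ∃ μ : Matching M W, MenOptimalStable μ P then h.choose else Matching.empty M W

/-- The women-proposing deferred acceptance rule `D^W`. -/
noncomputable def wpda (P : Profile M W) : Matching M W :=
  letI := Classical.dec (∃ μ : Matching M W, WomenOptimalStable μ P)
  if h : ∃ μ : Matching M W, WomenOptimalStable μ P then h.choose else Matching.empty M W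

/-- A domain of preference profiles: a set of admissible preferences for each agent. -/
structure Domain (M W : Type*) where
  men : M → Set (LinearOrder (Option W))
  women : W → Set (LinearOrder (Option M))

/-- Membership of a profile in (the product domain generated by) a domain. -/
def Domain.mem (D : Domain M W) (P : Profile M W) : Prop :=
  (∀ m, P.menPref m ∈ D.men m) ∧ (∀ w, P.womenPref w ∈ D.women w)

def Profile.updateMan [DecidableEq M] (P : Profile M W) (m : M)
    (p : LinearOrder (Option W)) : Profile M W :=
  ⟨Function.update P.menPref m p, P.womenPref⟩

def Profile.updateWoman [DecidableEq W] (P : Profile M W) (w : W)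
    (p : LinearOrder (Option M)) : Profile M W :=
  ⟨P.menPref, Function.update P.womenPref w p⟩

/-- A matching rule is stable on a domain if it selects a stable matching at
every profile of the domain. -/
def StableOn (D : Domain M W) (φ : Profile M W → Matching M W) : Prop :=
  ∀ P, D.mem P → Stable (φ P) P

/-- Strategy-proofness on a domain: no single agent can strictly gain by
misreporting an admissible preference. -/
def StrategyProofOn [DecidableEq M] [DecidableEq W] (D : Domain M W)
    (φ : Profile M W → Matching M W) : Prop :=
  ∀ P, D.mem P →
    (∀ m p, p ∈ D.men m →
      (P.menPref m).le ((φ (P.updateMan m p)).menMatch m) ((φ P).menMatch m)) ∧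
    (∀ w p, p ∈ D.women w →
      (P.womenPref w).le ((φ (P.updateWoman w p)).womenMatch w) ((φ P).womenMatch w))

/-- A coalition `(Sm, Sw)` manipulates `φ` at `P` via the admissible profile `Q`
(which agrees with `P` outside the coalition): every coalition member is
strictly better off at `φ Q` than at `φ P` according to true preferences. -/
def Manipulation (D : Domain M W) (φ : Profile M W → Matching M W)
    (P Q : Profile M W) (Sm : Set M) (Sw : Set W) : Prop :=
  D.mem P ∧ D.mem Q ∧
  (∀ m ∉ Sm, Q.menPref m = P.menPref m) ∧
  (∀ w ∉ Sw, Q.womenPref w = P.womenPref w) ∧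
  (∀ m ∈ Sm, (P.menPref m).lt ((φ P).menMatch m) ((φ Q).menMatch m)) ∧
  (∀ w ∈ Sw, (P.womenPref w).lt ((φ P).womenMatch w) ((φ Q).womenMatch w))

/-- Group strategy-proofness on a domain: no nonempty coalition can manipulate. -/
def GroupStrategyProofOn (D : Domain M W) (φ : Profile M W → Matching M W) : Prop :=
  ¬ ∃ (P Q : Profile M W) (Sm : Set M) (Sw : Set W),
      (Sm.Nonempty ∨ Sw.Nonempty) ∧ Manipulation D φ P Q Sm Sw

/-- Top dominance for women. -/
def TopDominanceWomen (D : Domain M W) : Prop :=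
  ∀ w : W, ∀ x : M, ∀ y z : Option M,
    (∃ P ∈ D.women w, P.lt y (some x) ∧ P.lt z y ∧ P.le none y) →
      ¬ ∃ P' ∈ D.women w, P'.lt z (some x) ∧ P'.lt y z ∧ P'.le none z

/-- Top dominance for men. -/
def TopDominanceMen (D : Domain M W) : Prop :=
  ∀ m : M, ∀ x : W, ∀ y z : Option W,
    (∃ P ∈ D.men m, P.lt y (some x) ∧ P.lt z y ∧ P.le none y) →
      ¬ ∃ P' ∈ D.men m, P'.lt z (some x) ∧ P'.lt y z ∧ P'.le none z

/-- Unrestricted top pairs for men. -/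
def UnrestrictedTopPairsMen (D : Domain M W) : Prop :=
  ∀ m : M,
    (∀ w w' : W, w ≠ w' → ∃ P ∈ D.men m, P.lt (some w') (some w) ∧
        ∀ z : Option W, z ≠ some w → z ≠ some w' → P.lt z (some w')) ∧
    (∀ w : W, ∃ P ∈ D.men m, P.lt none (some w) ∧
        ∀ z : Option W, z ≠ some w → z ≠ none → P.lt z none) ∧
    (∃ P ∈ D.men m, ∀ z : Option W, z ≠ none → P.lt z none)

/-- Unrestricted top pairs for women. -/
def UnrestrictedTopPairsWomen (D : Domain M W) : Prop :=
  ∀ w : W,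
    (∀ m m' : M, m ≠ m' → ∃ P ∈ D.women w, P.lt (some m') (some m) ∧
        ∀ z : Option M, z ≠ some m → z ≠ some m' → P.lt z (some m')) ∧
    (∀ m : M, ∃ P ∈ D.women w, P.lt none (some m) ∧
        ∀ z : Option M, z ≠ some m → z ≠ none → P.lt z none) ∧
    (∃ P ∈ D.women w, ∀ z : Option M, z ≠ none → P.lt z none)

/-- Single-peakedness of a preference over `Option α` with respect to a prior
order `ord` on `α`:  moving away from the peak (the most preferred element of
`α`) on either side makes the preference decline. -/
def SinglePeaked {α : Type*} (ord : LinearOrder α) (P : LinearOrder (Option α)) : Prop :=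
  ∀ peak : α, (∀ a : α, P.le (some a) (some peak)) →
    ∀ a b : α, ((ord.le peak a ∧ ord.lt a b) ∨ (ord.lt b a ∧ ord.le a peak)) →
      P.lt (some b) (some a)

/-- The maximal single-peaked domain with respect to orders on men and women. -/
def maximalSinglePeakedDomain (ordM : LinearOrder M) (ordW : LinearOrder W) : Domain M W :=
  ⟨fun _ => {P | SinglePeaked ordW P}, fun _ => {P | SinglePeaked ordM P}⟩

/-- A domain is single-peaked if all admissible preferences are single-peaked. -/
def Domain.SinglePeakedDomain (D : Domain M W) (ordM : LinearOrder M)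
    (ordW : LinearOrder W) : Prop :=
  (∀ m, ∀ P ∈ D.men m, SinglePeaked ordW P) ∧ (∀ w, ∀ P ∈ D.women w, SinglePeaked ordM P)

/-- Anonymity: all men share the same admissible set, and all women do too. -/
def Domain.Anonymous (D : Domain M W) : Prop :=
  (∀ m m' : M, D.men m = D.men m') ∧ (∀ w w' : W, D.women w = D.women w')

/-- Cyclical inclusion for men. -/
def CyclicalInclusionMen (D : Domain M W) : Prop :=
  ∀ m : M,
    (∃ P ∈ D.men m, ∀ z : Option W, z ≠ none → P.lt z none) ∧
    (∀ w w' : W,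
      (∃ P ∈ D.men m, P.lt (some w') (some w) ∧ P.lt none (some w')) →
      (∃ P ∈ D.men m, P.lt (some w) (some w') ∧ P.lt none (some w)))

/-- Cyclical inclusion for women. -/
def CyclicalInclusionWomen (D : Domain M W) : Prop :=
  ∀ w : W,
    (∃ P ∈ D.women w, ∀ z : Option M, z ≠ none → P.lt z none) ∧
    (∀ m m' : M,
      (∃ P ∈ D.women w, P.lt (some m') (some m) ∧ P.lt none (some m')) →
      (∃ P ∈ D.women w, P.lt (some m) (some m') ∧ P.lt none (some m)))

/-- The unrestricted domain: every strict linear order is admissible. -/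
def fullDomain (M W : Type*) : Domain M W :=
  ⟨fun _ => Set.univ, fun _ => Set.univ⟩


/-- A coalition `(Sm, Sw)` manipulates the MPDA rule at `P` via the misreport
profile `Q` (which agrees with `P` outside the coalition): every coalition
member is strictly better off under true preferences. -/
def MpdaManipulates (P Q : Profile M W) (Sm : Set M) (Sw : Set W) : Prop :=
  (∀ m ∉ Sm, Q.menPref m = P.menPref m) ∧
  (∀ w ∉ Sw, Q.womenPref w = P.womenPref w) ∧
  (∀ m ∈ Sm, (P.menPref m).lt ((mpda P).menMatch m) ((mpda Q).menMatch m)) ∧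
  (∀ w ∈ Sw, (P.womenPref w).lt ((mpda P).womenMatch w) ((mpda Q).womenMatch w))


/-!
Suppose some man strictly prefers `μ' := D^M(P̃)` to `μ := D^M(P)`.  Every coalition member gains
and `μ'` is stable for the reported preferences, so `μ'` is individually rational for the true
ones, and the blocking lemma of Gale and Sotomayor applies to `μ'` and the men-optimal stable
matching `μ`: some pair `(f, w)` blocks `μ'` at `P`, where `f` does not strictly gain and `w`
strictly loses.  Neither of them is in the coalition, so both report truthfully, and `(f, w)`
blocks `μ'` at the reported profile, contradicting its stability.

The blocking lemma is proved through the rounds of deferred acceptance, which also show that a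
men-optimal stable matching exists, so that `mpda` does not fall back on `Matching.empty`.
-/

theorem Matching.menMatch_injective (μ : Matching M W) {m m' : M} {w : W}
    (h : μ.menMatch m = some w) (h' : μ.menMatch m' = some w) : m = m' :=
  Option.some_injective _ <| ((μ.consistent m w).mp h).symm.trans ((μ.consistent m' w).mp h')

open Classical in
noncomputable def Matching.ofMen (f : M → Option W)
    (hf : ∀ m m' w, f m = some w → f m' = some w → m = m') : Matching M W where
  menMatch := f
  womenMatch w := if h : ∃ m, f m = some w then some h.choose else none
  consistent m w := by
    constructor
    · intro h
      have hex : ∃ m, f m = some w := ⟨m, h⟩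
      rw [dif_pos hex, hf _ _ _ hex.choose_spec h]
    · intro h
      split_ifs at h with hex
      cases h
      exact hex.choose_spec

theorem Stable.lt_womenMatch {μ : Matching M W} {P : Profile M W} (hμ : Stable μ P) {m : M}
    {w : W} (h : (P.menPref m).lt (μ.menMatch m) (some w)) :
    (P.womenPref w).lt (some m) (μ.womenMatch w) := by
  let _ := P.womenPref w
  let _ := P.menPref m
  refine lt_of_le_of_ne (not_lt.mp fun hw => hμ.2 m w ⟨h, hw⟩) fun hm => ?_
  rw [(μ.consistent m w).mpr hm.symm] at h
  exact h.false

theorem IndividuallyRational.exists_eq_some {μ : Matching M W} {P : Profile M W}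
    (hμ : IndividuallyRational μ P) {m : M} {x : Option W}
    (h : (P.menPref m).lt (μ.menMatch m) x) : ∃ w, x = some w := by
  let _ := P.menPref m
  refine Option.ne_none_iff_exists'.mp fun hx => ?_
  subst hx
  exact (lt_of_le_of_lt (hμ.1 m) h).false

theorem MenOptimalStable.menMatch_eq {μ ν : Matching M W} {P : Profile M W}
    (hμ : MenOptimalStable μ P) (hν : MenOptimalStable ν P) : μ.menMatch = ν.menMatch := by
  funext m
  let _ := P.menPref m
  exact le_antisymm (hν.2 μ hμ.1 m) (hμ.2 ν hν.1 m)

theorem Finset.image_eq_image_of_injOn {α β : Type*} [DecidableEq β] {s : Finset α}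
    {f g : α → β} (hf : Set.InjOn f s) (h : s.image f ⊆ s.image g) : s.image f = s.image g :=
  Finset.eq_of_subset_of_card_le h <| by
    rw [Finset.card_image_of_injOn hf]; exact Finset.card_image_le

namespace DeferredAcceptance

section Proposals

variable [Fintype W] (P : Profile M W)

open Classical in
noncomputable def options (R : Set (M × W)) (m : M) : Finset (Option W) :=
  Finset.univ.filter fun x => ∀ w, x = some w → (m, w) ∉ R

theorem none_mem_options (R : Set (M × W)) (m : M) : none ∈ options R m := by
  simp [options]

theorem some_mem_options {R : Set (M × W)} {m : M} {w : W} :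
    some w ∈ options R m ↔ (m, w) ∉ R := by
  simp [options]

/-- `R` is the set of rejections so far: `m` proposes to his favourite among the women who have
not rejected him, or to `none` if he prefers staying single to all of them. -/
noncomputable def proposal (R : Set (M × W)) (m : M) : Option W :=
  letI := P.menPref m
  (options R m).max' ⟨none, none_mem_options R m⟩

variable {P}

theorem le_proposal {R : Set (M × W)} {m : M} {x : Option W} (hx : x ∈ options R m) :
    (P.menPref m).le x (proposal P R m) :=
  letI := P.menPref m
  Finset.le_max' _ _ hx

theorem none_le_proposal (R : Set (M × W)) (m : M) : (P.menPref m).le none (proposal P R m) :=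
  le_proposal (none_mem_options R m)

theorem some_le_proposal {R : Set (M × W)} {m : M} {w : W} (h : (m, w) ∉ R) :
    (P.menPref m).le (some w) (proposal P R m) :=
  le_proposal (some_mem_options.mpr h)

theorem mem_of_proposal_lt {R : Set (M × W)} {m : M} {w : W}
    (h : (P.menPref m).lt (proposal P R m) (some w)) : (m, w) ∈ R := by
  let _ := P.menPref m
  by_contra hw
  exact (some_le_proposal hw).not_gt h

theorem proposal_not_mem {R : Set (M × W)} {m : M} {w : W} (h : proposal P R m = some w) :
    (m, w) ∉ R := by
  have hmem : proposal P R m ∈ options R m :=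
    letI := P.menPref m
    Finset.max'_mem _ _
  rw [h] at hmem
  exact some_mem_options.mp hmem

theorem proposal_anti {R R' : Set (M × W)} (h : R ⊆ R') (m : M) :
    (P.menPref m).le (proposal P R' m) (proposal P R m) := by
  cases hp : proposal P R' m with
  | none => exact none_le_proposal R m
  | some w => exact some_le_proposal fun hw => proposal_not_mem hp (h hw)

theorem proposal_eq_of_subset {R R' : Set (M × W)} (h : R ⊆ R') {m : M} {w : W}
    (hR : proposal P R m = some w) (hR' : (m, w) ∉ R') : proposal P R' m = some w := by
  let _ := P.menPref m
  exact le_antisymm (hR ▸ proposal_anti h m) (some_le_proposal hR')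

variable (P)

def Rejects (R : Set (M × W)) (m : M) (w : W) : Prop :=
  proposal P R m = some w ∧
    ((P.womenPref w).lt (some m) none ∨
      ∃ m', proposal P R m' = some w ∧ (P.womenPref w).lt (some m) (some m'))

/-- Men-proposing deferred acceptance with simultaneous proposals, recorded by the set of
rejections after `n` rounds. -/
def rejected : ℕ → Set (M × W)
  | 0 => ∅
  | n + 1 => rejected n ∪ {q | Rejects P (rejected n) q.1 q.2}

theorem rejected_mono : Monotone (rejected P) :=
  monotone_nat_of_le_succ fun _ => Set.subset_union_left

variable {P}

theorem exists_rejects_of_mem_rejected {n : ℕ} {m : M} {w : W} (h : (m, w) ∈ rejected P n) :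
    ∃ k < n, Rejects P (rejected P k) m w := by
  induction n with
  | zero => exact absurd h (Set.notMem_empty _)
  | succ n ih =>
    rcases h with h | h
    · obtain ⟨k, hk, hrej⟩ := ih h
      exact ⟨k, by omega, hrej⟩
    · exact ⟨n, n.lt_succ_self, h⟩

theorem proposal_succ_of_best {n : ℕ} {f : M} {w : W}
    (hf : proposal P (rejected P n) f = some w) (hacc : (P.womenPref w).le none (some f))
    (hbest : ∀ g, proposal P (rejected P n) g = some w → (P.womenPref w).le (some g) (some f)) :
    proposal P (rejected P (n + 1)) f = some w := by
  let _ := P.womenPref w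
  refine proposal_eq_of_subset Set.subset_union_left hf ?_
  rintro (h | ⟨-, hlt | ⟨g, hg, hlt⟩⟩)
  · exact proposal_not_mem hf h
  · exact hlt.not_ge hacc
  · exact hlt.not_ge (hbest g hg)

theorem not_mem_rejected_of_stable {ν : Matching M W} (hν : Stable ν P) (n : ℕ) {m : M} {w : W}
    (hmw : ν.menMatch m = some w) : (m, w) ∉ rejected P n := by
  induction n generalizing m w with
  | zero => exact Set.notMem_empty _
  | succ n ih =>
    let _ := P.womenPref w
    have hνw := (ν.consistent m w).mp hmw
    rintro (h | ⟨-, hlt | ⟨m', hm', hlt⟩⟩)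
    · exact ih hmw h
    · exact hlt.not_ge (hνw ▸ hν.1.2 w)
    · let _ := P.menPref m'
      have hle : (P.menPref m').le (ν.menMatch m') (some w) := by
        cases hν' : ν.menMatch m' with
        | none => exact hm' ▸ none_le_proposal _ m'
        | some w' => exact hm' ▸ some_le_proposal (ih hν')
      have hne : ν.menMatch m' ≠ some w := fun h' =>
        hlt.ne (congrArg some (ν.menMatch_injective hmw h'))
      exact hν.2 m' w ⟨lt_of_le_of_ne hle hne, hνw ▸ hlt⟩

end Proposals

variable [Fintype M] [Fintype W]

section Rounds

variable {P : Profile M W}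

theorem exists_best_proposer {n : ℕ} {m : M} {w : W}
    (hm : proposal P (rejected P n) m = some w) :
    ∃ f, proposal P (rejected P n) f = some w ∧ (P.womenPref w).le (some m) (some f) ∧
      ∀ g, proposal P (rejected P n) g = some w → (P.womenPref w).le (some g) (some f) := by
  let _ := P.womenPref w
  classical
  obtain ⟨f, hf, hbest⟩ := Finset.exists_max_image
    (Finset.univ.filter fun g => proposal P (rejected P n) g = some w) some ⟨m, by simpa using hm⟩
  simp only [Finset.mem_filter, Finset.mem_univ, true_and] at hf hbest
  exact ⟨f, hf, hbest m hm, hbest⟩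

/-- The best proposal a woman holds only improves. -/
theorem exists_proposer_ge {n k : ℕ} (hnk : n ≤ k) {m : M} {w : W}
    (hm : proposal P (rejected P n) m = some w) (hacc : (P.womenPref w).le none (some m)) :
    ∃ f, proposal P (rejected P k) f = some w ∧ (P.womenPref w).le (some m) (some f) := by
  let _ := P.womenPref w
  induction k, hnk using Nat.le_induction with
  | base => exact ⟨m, hm, le_rfl⟩
  | succ k _ ih =>
    obtain ⟨f₀, hf₀, hmf₀⟩ := ih
    obtain ⟨f, hf, hf₀f, hbest⟩ := exists_best_proposer hf₀
    exact ⟨f, proposal_succ_of_best hf (hacc.trans (hmf₀.trans hf₀f)) hbest, hmf₀.trans hf₀f⟩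

theorem exists_proposer_of_mem_rejected {k : ℕ} {m₀ : M} {w : W}
    (h : (m₀, w) ∈ rejected P (k + 1)) (hacc : (P.womenPref w).le none (some m₀)) :
    ∃ f, proposal P (rejected P k) f = some w ∧ proposal P (rejected P (k + 1)) f = some w ∧
      (P.womenPref w).lt (some m₀) (some f) := by
  let _ := P.womenPref w
  obtain ⟨j, hj, -, hlt | ⟨m₁, hm₁, hlt⟩⟩ := exists_rejects_of_mem_rejected h
  · exact absurd hacc hlt.not_ge
  obtain ⟨f₀, hf₀, hm₁f₀⟩ :=
    exists_proposer_ge (Nat.lt_succ_iff.mp hj) hm₁ (hacc.trans hlt.le)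
  obtain ⟨f, hf, hf₀f, hbest⟩ := exists_best_proposer hf₀
  have hm₀f := hlt.trans_le (hm₁f₀.trans hf₀f)
  exact ⟨f, hf, proposal_succ_of_best hf (hacc.trans hm₀f.le) hbest, hm₀f⟩

end Rounds

variable (P : Profile M W)

theorem exists_rejected_stabilizes : ∃ N, ∀ n, N ≤ n → rejected P N = rejected P n :=
  WellFoundedGT.monotone_chain_condition ⟨rejected P, rejected_mono P⟩

noncomputable def finalRound : ℕ := (exists_rejected_stabilizes P).choose

def final : Set (M × W) := rejected P (finalRound P)

variable {P}

theorem rejected_subset_final (n : ℕ) : rejected P n ⊆ final P := by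
  have hN := (exists_rejected_stabilizes P).choose_spec (max (finalRound P) n) (le_max_left _ _)
  rw [final, finalRound, hN]
  exact rejected_mono P (le_max_right _ _)

theorem mem_final_of_rejects {n : ℕ} {m : M} {w : W} (h : Rejects P (rejected P n) m w) :
    (m, w) ∈ final P :=
  rejected_subset_final (n + 1) (Or.inr h)

theorem not_rejects_final {m : M} {w : W} : ¬ Rejects P (final P) m w := fun h =>
  proposal_not_mem h.1 (mem_final_of_rejects h)

theorem proposal_final_injective {m m' : M} {w : W} (h : proposal P (final P) m = some w)
    (h' : proposal P (final P) m' = some w) : m = m' := by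
  let _ := P.womenPref w
  rcases lt_trichotomy (some m) (some m') with hlt | heq | hgt
  · exact absurd ⟨h, Or.inr ⟨m', h', hlt⟩⟩ not_rejects_final
  · exact Option.some_injective _ heq
  · exact absurd ⟨h', Or.inr ⟨m, h, hgt⟩⟩ not_rejects_final

theorem acceptable_of_proposal_final {m : M} {w : W} (h : proposal P (final P) m = some w) :
    (P.womenPref w).le none (some m) := by
  let _ := P.womenPref w
  exact not_lt.mp fun hlt => not_rejects_final ⟨h, Or.inl hlt⟩

variable (P)

noncomputable def daMatching : Matching M W :=
  Matching.ofMen (proposal P (final P)) fun _ _ _ => proposal_final_injective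

theorem daMatching_individuallyRational : IndividuallyRational (daMatching P) P := by
  refine ⟨fun m => none_le_proposal _ m, fun w => ?_⟩
  let _ := P.womenPref w
  cases hw : (daMatching P).womenMatch w with
  | none => exact le_rfl
  | some m => exact acceptable_of_proposal_final (((daMatching P).consistent m w).mpr hw)

theorem daMatching_stable : Stable (daMatching P) P := by
  refine ⟨daMatching_individuallyRational P, fun m w ⟨hm, hw⟩ => ?_⟩
  let _ := P.womenPref w
  have hacc : (P.womenPref w).le none (some m) :=
    ((daMatching_individuallyRational P).2 w).trans hw.le
  obtain ⟨k, hk, -, hlt | ⟨m₁, hm₁, hlt⟩⟩ := exists_rejects_of_mem_rejected (mem_of_proposal_lt hm)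
  · exact hlt.not_ge hacc
  obtain ⟨f, hf, hm₁f⟩ := exists_proposer_ge hk.le hm₁ (hacc.trans hlt.le)
  rw [((daMatching P).consistent f w).mp hf] at hw
  exact hw.not_ge (hlt.le.trans hm₁f)

theorem daMatching_menOptimalStable : MenOptimalStable (daMatching P) P := by
  refine ⟨daMatching_stable P, fun ν hν m => ?_⟩
  cases hνm : ν.menMatch m with
  | none => exact none_le_proposal _ m
  | some w => exact some_le_proposal (not_mem_rejected_of_stable hν _ hνm)

variable {P}

theorem proposal_eq_final_of_le {k j : ℕ} (hkj : k ≤ j) {m : M}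
    (hk : proposal P (rejected P k) m = proposal P (final P) m) :
    proposal P (rejected P j) m = proposal P (final P) m := by
  let _ := P.menPref m
  exact le_antisymm (hk ▸ proposal_anti (rejected_mono P hkj) m)
    (proposal_anti (rejected_subset_final j) m)

/-- Some man of `D` is the last one of `D` to reach his final proposal. -/
theorem exists_last_arrival (D : Finset M) (hD : D.Nonempty) :
    ∃ m ∈ D, ∃ S, (∀ m' ∈ D, proposal P (rejected P S) m' = proposal P (final P) m') ∧
      ∀ k < S, proposal P (rejected P k) m ≠ proposal P (final P) m := by
  classical
  have harrives : ∀ m, ∃ k, proposal P (rejected P k) m = proposal P (final P) m :=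
    fun m => ⟨finalRound P, rfl⟩
  obtain ⟨m, hm, hlast⟩ := D.exists_max_image (fun m => Nat.find (harrives m)) hD
  exact ⟨m, hm, _,
    fun m' hm' => proposal_eq_final_of_le (hlast m' hm') (Nat.find_spec (harrives m')),
    fun k hk => Nat.find_min _ hk⟩

/-- When `m` reaches his final partner `w` in round `k + 1`, the man she held in round `k`
is displaced, and she ranks him above any acceptable man she rejected before. -/
theorem exists_displaced {k : ℕ} {m m₀ : M} {w : W} (hfinal : proposal P (final P) m = some w)
    (harrive : proposal P (rejected P (k + 1)) m = some w)
    (hbefore : proposal P (rejected P k) m ≠ some w) (hm₀ : (m₀, w) ∈ rejected P (k + 1))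
    (hacc : (P.womenPref w).le none (some m₀)) :
    ∃ f, proposal P (rejected P (k + 1)) f = some w ∧ (f, w) ∈ final P ∧
      (P.womenPref w).lt (some m₀) (some f) ∧ (P.womenPref w).lt (some f) (some m) := by
  let _ := P.womenPref w
  obtain ⟨f, hfk, hf, hm₀f⟩ := exists_proposer_of_mem_rejected hm₀ hacc
  have hfm : (P.womenPref w).lt (some f) (some m) := by
    rcases lt_trichotomy (some f) (some m) with hlt | heq | hgt
    · exact hlt
    · cases heq
      exact absurd hfk hbefore
    · exact absurd (mem_final_of_rejects ⟨harrive, Or.inr ⟨f, hf, hgt⟩⟩) (proposal_not_mem hfinal)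
  exact ⟨f, hf, mem_final_of_rejects ⟨hf, Or.inr ⟨m, harrive, hfm⟩⟩, hm₀f, hfm⟩

end DeferredAcceptance

open DeferredAcceptance

theorem exists_menOptimalStable [Fintype M] [Fintype W] (P : Profile M W) :
    ∃ μ : Matching M W, MenOptimalStable μ P :=
  ⟨daMatching P, daMatching_menOptimalStable P⟩

theorem mpda_menOptimalStable [Fintype M] [Fintype W] (P : Profile M W) :
    MenOptimalStable (mpda P) P := by
  rw [mpda, dif_pos (exists_menOptimalStable P)]
  exact (exists_menOptimalStable P).choose_spec

open Classical in
noncomputable def improvers [Fintype M] (P : Profile M W) (μ ν : Matching M W) : Finset M :=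
  Finset.univ.filter fun m => (P.menPref m).lt (μ.menMatch m) (ν.menMatch m)

theorem mem_improvers [Fintype M] {P : Profile M W} {μ ν : Matching M W} {m : M} :
    m ∈ improvers P μ ν ↔ (P.menPref m).lt (μ.menMatch m) (ν.menMatch m) := by
  simp [improvers]

theorem exists_blocking_of_not_mem_image {P : Profile M W} {μ ν : Matching M W}
    (hμ : Stable μ P) (hν : IndividuallyRational ν P) {m₀ : M} {w : W}
    (hm₀ : (P.menPref m₀).lt (μ.menMatch m₀) (ν.menMatch m₀)) (hνm₀ : ν.menMatch m₀ = some w)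
    (hw : ∀ m, (P.menPref m).lt (μ.menMatch m) (ν.menMatch m) → μ.menMatch m ≠ some w) :
    ∃ f w, Blocks f w ν P ∧ ¬ (P.menPref f).lt (μ.menMatch f) (ν.menMatch f) ∧
      (P.womenPref w).lt (ν.womenMatch w) (μ.womenMatch w) := by
  let _ := P.womenPref w
  have hνw : ν.womenMatch w = some m₀ := (ν.consistent m₀ w).mp hνm₀
  have hm₀μ : (P.womenPref w).lt (some m₀) (μ.womenMatch w) := hμ.lt_womenMatch (hνm₀ ▸ hm₀)
  obtain ⟨f, hμw⟩ : ∃ f, μ.womenMatch w = some f := Option.ne_none_iff_exists'.mp fun h =>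
    ((hνw ▸ hν.2 w).trans_lt (h ▸ hm₀μ)).false
  have hμf : μ.menMatch f = some w := (μ.consistent f w).mpr hμw
  have hf : ¬ (P.menPref f).lt (μ.menMatch f) (ν.menMatch f) := fun h => hw f h hμf
  let _ := P.menPref f
  refine ⟨f, w, ⟨?_, ?_⟩, hf, hνw ▸ hm₀μ⟩
  · refine lt_of_le_of_ne (hμf ▸ not_lt.mp hf) fun hνf => hf ?_
    rwa [ν.menMatch_injective hνf hνm₀]
  · rwa [hνw, ← hμw]

/-- Here `μ` and `ν` match the men of `B := improvers P μ ν` to the same women.  The last of these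
women to receive the proposal of her final partner displaces a man outside `B`, who blocks `ν`
together with her. -/
theorem exists_blocking_of_image_subset [Fintype M] [Fintype W] {P : Profile M W}
    {μ ν : Matching M W} (hμ : MenOptimalStable μ P) (hν : IndividuallyRational ν P)
    (hB : (improvers P μ ν).Nonempty)
    (hsub : ∀ m ∈ improvers P μ ν, ∃ m₀ ∈ improvers P μ ν, μ.menMatch m = ν.menMatch m₀) :
    ∃ f w, Blocks f w ν P ∧ ¬ (P.menPref f).lt (μ.menMatch f) (ν.menMatch f) ∧
      (P.womenPref w).lt (ν.womenMatch w) (μ.womenMatch w) := by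
  have hμda : ∀ m, μ.menMatch m = proposal P (final P) m :=
    congrFun (hμ.menMatch_eq (daMatching_menOptimalStable P))
  obtain ⟨m, hmB, S, hS, hfirst⟩ := exists_last_arrival (P := P) _ hB
  obtain ⟨m₀, hm₀B, hμm⟩ := hsub m hmB
  have hm₀ := mem_improvers.mp hm₀B
  obtain ⟨w, hνm₀⟩ := hμ.1.1.exists_eq_some hm₀
  have hfinal : proposal P (final P) m = some w := by rw [← hμda, hμm, hνm₀]
  have hνw : ν.womenMatch w = some m₀ := (ν.consistent m₀ w).mp hνm₀
  have hrej : (m₀, w) ∈ rejected P S :=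
    mem_of_proposal_lt (by rw [hS m₀ hm₀B, ← hμda, ← hνm₀]; exact hm₀)
  obtain _ | k := S
  · exact absurd hrej (Set.notMem_empty _)
  obtain ⟨f, hfk, hf, hm₀f, hfm⟩ := exists_displaced hfinal ((hS m hmB).trans hfinal)
    (hfinal ▸ hfirst k k.lt_succ_self) hrej (hνw ▸ hν.2 w)
  let _ := P.womenPref w
  let _ := P.menPref f
  have hμf : (P.menPref f).lt (μ.menMatch f) (some w) := by
    rw [hμda, ← hfk]
    exact lt_of_le_of_ne (proposal_anti (rejected_subset_final _) f)
      fun h => proposal_not_mem (h.trans hfk) hf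
  have hfB : f ∉ improvers P μ ν := fun h =>
    proposal_not_mem ((hS f h).symm.trans hfk) hf
  refine ⟨f, w, ⟨(not_lt.mp (mt mem_improvers.mpr hfB)).trans_lt hμf, hνw ▸ hm₀f⟩,
    mt mem_improvers.mpr hfB, ?_⟩
  rw [hνw, (μ.consistent m w).mp (hμm.trans hνm₀)]
  exact hm₀f.trans hfm

/-- The blocking lemma of Gale and Sotomayor. -/
theorem exists_blocking_pair [Fintype M] [Fintype W] {P : Profile M W} {μ ν : Matching M W}
    (hμ : MenOptimalStable μ P) (hν : IndividuallyRational ν P) {m : M}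
    (hm : (P.menPref m).lt (μ.menMatch m) (ν.menMatch m)) :
    ∃ f w, Blocks f w ν P ∧ ¬ (P.menPref f).lt (μ.menMatch f) (ν.menMatch f) ∧
      (P.womenPref w).lt (ν.womenMatch w) (μ.womenMatch w) := by
  classical
  by_cases hout : ∃ m₀ ∈ improvers P μ ν, ∃ w, ν.menMatch m₀ = some w ∧
      ∀ m ∈ improvers P μ ν, μ.menMatch m ≠ some w
  · obtain ⟨m₀, hm₀, w, hνm₀, hw⟩ := hout
    exact exists_blocking_of_not_mem_image hμ.1 hν (mem_improvers.mp hm₀) hνm₀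
      fun m hm => hw m (mem_improvers.mpr hm)
  push Not at hout
  refine exists_blocking_of_image_subset hμ hν ⟨m, mem_improvers.mpr hm⟩ fun m₁ hm₁ => ?_
  have hinj : Set.InjOn ν.menMatch (improvers P μ ν) := fun m₂ h₂ _ _ h => by
    obtain ⟨w, hw⟩ := hμ.1.1.exists_eq_some (mem_improvers.mp h₂)
    exact ν.menMatch_injective hw (h ▸ hw)
  have himage := Finset.image_eq_image_of_injOn hinj (g := μ.menMatch) fun x hx => by
    obtain ⟨m₀, hm₀, rfl⟩ := Finset.mem_image.mp hx
    obtain ⟨w, hw⟩ := hμ.1.1.exists_eq_some (mem_improvers.mp hm₀)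
    obtain ⟨m₂, hm₂, hμm₂⟩ := hout m₀ hm₀ w hw
    exact Finset.mem_image.mpr ⟨m₂, hm₂, hμm₂.trans hw.symm⟩
  obtain ⟨m₀, hm₀, h⟩ := Finset.mem_image.mp (himage ▸ Finset.mem_image_of_mem μ.menMatch hm₁)
  exact ⟨m₀, hm₀, h.symm⟩

theorem MpdaManipulates.individuallyRational [Fintype M] [Fintype W] {P Q : Profile M W}
    {Sm : Set M} {Sw : Set W} (h : MpdaManipulates P Q Sm Sw) :
    IndividuallyRational (mpda Q) P := by
  obtain ⟨hQm, hQw, hSm, hSw⟩ := h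
  refine ⟨fun m => ?_, fun w => ?_⟩
  · let _ := P.menPref m
    by_cases hm : m ∈ Sm
    · exact ((mpda_menOptimalStable P).1.1.1 m).trans (hSm m hm).le
    · exact hQm m hm ▸ (mpda_menOptimalStable Q).1.1.1 m
  · let _ := P.womenPref w
    by_cases hw : w ∈ Sw
    · exact ((mpda_menOptimalStable P).1.1.2 w).trans (hSw w hw).le
    · exact hQw w hw ▸ (mpda_menOptimalStable Q).1.1.2 w

/-- under any manipulation of MPDA, every man weakly prefers his
match at the true profile to his match at the manipulated profile. -/
theorem men_weakly_worse_off [Fintype M] [Fintype W]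
    (P Q : Profile M W) (Sm : Set M) (Sw : Set W)
    (h : MpdaManipulates P Q Sm Sw) (m : M) :
    (P.menPref m).le ((mpda Q).menMatch m) ((mpda P).menMatch m) := by
  let _ := P.menPref m
  refine not_lt.mp fun hm => ?_
  obtain ⟨f, w, ⟨hf, hw⟩, hf_not_gain, hw_loses⟩ :=
    exists_blocking_pair (mpda_menOptimalStable P) h.individuallyRational hm
  obtain ⟨hQm, hQw, hSm, hSw⟩ := h
  have hfSm : f ∉ Sm := fun hf' => hf_not_gain (hSm f hf')
  have hwSw : w ∉ Sw := fun hw' =>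
    let _ := P.womenPref w
    (hSw w hw').not_gt hw_loses
  exact (mpda_menOptimalStable Q).1.2 f w ⟨hQm f hfSm ▸ hf, hQw w hwSw ▸ hw⟩
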